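/- arXiv:1501.07091 — 3 statements merged into one kernel-verified Lean document; each statement's English description precedes it below -/
import Mathlib

section
/- In the setting of the reverse-chain representation, for any $1 \le p \le N - n^*$ and any bounded measurable $f_p: \mathbb{R}^{d\times p} \to \mathbb{R}$, $\mathbb{E}\big[f_p(Y^{y;N}_p, \ldots, Y^{y;N}_1)\,\mathcal{Y}^{y;N}_p\big] = \int f_p(y_{N-p}, \ldots, y_{N-1}) \prod_{i=N-p+1}^{N} p_{i-1}(y_{i-1}, y_i)\,dy_{N-p}\cdots dy_{N-1}$, where $y_N := y$ and $p_{i-1} := p_{i-1,i}$ are the one-step transition densities. -/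
open MeasureTheory

/-- Extend a finite trajectory `z : Fin m → ℝᵈ` to a path `ℕ → ℝᵈ` started at `y`. -/
noncomputable def revTraj {d m : ℕ} (y : Fin d → ℝ) (z : Fin m → (Fin d → ℝ)) :
    ℕ → (Fin d → ℝ) :=
  fun k => if h : 1 ≤ k ∧ k ≤ m then z ⟨k - 1, by omega⟩ else y

/-!
On paths started at `y`, the integrand `f(Y_P, …, Y_1) 𝒴_P` is a function of `(Y_1, …, Y_P)`,
whose law is `Q(z) dz` with `Q = ∏_k q_k`. Multiplying the integrand by `Q` turns every factor
`ψ_k q_k` into the forward density `p_{N-k-1}`, and reversing the order of the coordinates gives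
the right-hand side. As neither `ψ` nor `q` is assumed measurable, the integrand is only known to
agree `Q dz`-a.e. with the measurable function `(f ∏ p) / Q`; that suffices for both the change
of variables and the integral against `Q dz`.
-/

open Finset

section WithDensity

variable {Ω Y : Type*} [MeasurableSpace Ω] [MeasurableSpace Y] {μ : Measure Y} {Q g h : Y → ℝ}

theorem map_eq_withDensity_ofReal {ν : Measure Ω} [IsFiniteMeasure ν] {π : Ω → Y}
    (hπ : Measurable π) (hQ : Integrable Q μ) (hQ0 : 0 ≤ᵐ[μ] Q)
    (hlaw : ∀ A, MeasurableSet A → ν.real (π ⁻¹' A) = ∫ z in A, Q z ∂μ) :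
    ν.map π = μ.withDensity fun z => ENNReal.ofReal (Q z) := by
  ext A hA
  rw [Measure.map_apply hπ hA, withDensity_apply _ hA,
    ← ofReal_integral_eq_lintegral_ofReal hQ.restrict (ae_restrict_of_ae hQ0), ← hlaw A hA,
    ofReal_measureReal]

theorem aestronglyMeasurable_withDensity_ofReal (hh : AEMeasurable h μ)
    (hQ : AEMeasurable Q μ) (hgQ : ∀ᵐ z ∂μ, g z * Q z = h z) :
    AEStronglyMeasurable g (μ.withDensity fun z => ENNReal.ofReal (Q z)) := by
  have hac := withDensity_absolutelyContinuous μ fun z => ENNReal.ofReal (Q z)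
  refine ((hh.mono_ac hac).div (hQ.mono_ac hac)).aestronglyMeasurable.congr ?_
  refine (ae_withDensity_iff' hQ.ennreal_ofReal).2 ?_
  filter_upwards [hgQ] with z hz hQz
  rw [Pi.div_apply, ← hz, mul_div_cancel_right₀ _ fun h0 => hQz (by simp [h0])]

theorem integral_withDensity_ofReal_of_mul_ae_eq (hQ : AEMeasurable Q μ) (hQ0 : 0 ≤ᵐ[μ] Q)
    (hgQ : ∀ᵐ z ∂μ, g z * Q z = h z) :
    ∫ z, g z ∂μ.withDensity (fun z => ENNReal.ofReal (Q z)) = ∫ z, h z ∂μ := by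
  rw [show (fun z => ENNReal.ofReal (Q z)) = fun z => ((Q z).toNNReal : ENNReal) from rfl,
    integral_withDensity_eq_integral_smul₀ hQ.real_toNNReal]
  refine integral_congr_ae ?_
  filter_upwards [hQ0, hgQ] with z hz0 hz
  rw [NNReal.smul_def, Real.coe_toNNReal _ hz0, smul_eq_mul, mul_comm, hz]

end WithDensity

section RevTraj

variable {d m P : ℕ} (y : Fin d → ℝ)

theorem revTraj_of_mem (z : Fin m → (Fin d → ℝ)) {k : ℕ} (h1 : 1 ≤ k) (h2 : k ≤ m) :
    revTraj y z k = z ⟨k - 1, by omega⟩ := by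
  simp [revTraj, h1, h2]

@[simp]
theorem revTraj_zero (z : Fin m → (Fin d → ℝ)) : revTraj y z 0 = y := by
  simp [revTraj]

theorem measurable_revTraj_apply (k : ℕ) :
    Measurable fun z : Fin m → (Fin d → ℝ) => revTraj y z k := by
  unfold revTraj
  split_ifs
  exacts [measurable_pi_apply _, measurable_const]

def revProj (P : ℕ) (ω : ℕ → (Fin d → ℝ)) : Fin P → (Fin d → ℝ) :=
  fun j => ω (j + 1)

theorem measurable_revProj : Measurable (revProj (d := d) P) :=
  measurable_pi_lambda _ fun _ => measurable_pi_apply _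

@[simp]
theorem revProj_revTraj (z : Fin P → (Fin d → ℝ)) : revProj P (revTraj y z) = z := by
  funext j
  rw [revProj, revTraj_of_mem y z (by omega) (by omega)]
  simp

theorem revTraj_revProj {ω : ℕ → (Fin d → ℝ)} (h0 : ω 0 = y) {k : ℕ} (hk : k ≤ P) :
    revTraj y (revProj P ω) k = ω k := by
  rcases Nat.eq_zero_or_pos k with rfl | hk1
  · rw [revTraj_zero, h0]
  · rw [revTraj_of_mem y _ hk1 hk, revProj, Fin.val_mk, Nat.sub_add_cancel hk1]

theorem revTraj_sub_eq_snoc (z : Fin P → (Fin d → ℝ)) (i : Fin (P + 1)) :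
    revTraj y z (P - i) = (Fin.snoc (fun j => z j.rev) y : Fin (P + 1) → Fin d → ℝ) i := by
  rcases i.eq_castSucc_or_eq_last with ⟨j, rfl⟩ | rfl
  · rw [Fin.snoc_castSucc, revTraj_of_mem y z (by rw [Fin.val_castSucc]; omega) (by omega)]
    congr 1
  · simp

end RevTraj

section RevChain

variable {d P : ℕ}

noncomputable def revChainDensity (q : ℕ → (Fin d → ℝ) → (Fin d → ℝ) → ℝ) (y : Fin d → ℝ)
    (P : ℕ) (z : Fin P → (Fin d → ℝ)) : ℝ :=
  ∏ k ∈ range P, q k (revTraj y z k) (revTraj y z (k + 1))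

theorem revChainDensity_nonneg {q : ℕ → (Fin d → ℝ) → (Fin d → ℝ) → ℝ}
    (hq : ∀ m a b, 0 ≤ q m a b) (y : Fin d → ℝ) (P : ℕ) : 0 ≤ revChainDensity q y P :=
  fun _ => prod_nonneg fun _ _ => hq _ _ _

def IsRevChainLaw (N : ℕ) (q : ℕ → (Fin d → ℝ) → (Fin d → ℝ) → ℝ) (y : Fin d → ℝ)
    (ν : Measure (ℕ → (Fin d → ℝ))) : Prop :=
  ∀ m, m ≤ N → ∀ F : (ℕ → (Fin d → ℝ)) → ℝ, Measurable F → (∃ C, ∀ ω, |F ω| ≤ C) →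
    (∀ ω ω', (∀ k, k ≤ m → ω k = ω' k) → F ω = F ω') →
    ∫ ω, F ω ∂ν = ∫ z : Fin m → (Fin d → ℝ), F (revTraj y z) * revChainDensity q y m z

namespace IsRevChainLaw

variable {N : ℕ} {q : ℕ → (Fin d → ℝ) → (Fin d → ℝ) → ℝ} {y : Fin d → ℝ}
  {ν : Measure (ℕ → (Fin d → ℝ))}

theorem ae_eq_start [IsFiniteMeasure ν] (hν : IsRevChainLaw N q y ν) : ∀ᵐ ω ∂ν, ω 0 = y := by
  have hS : MeasurableSet {ω : ℕ → (Fin d → ℝ) | ω 0 ≠ y} :=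
    (measurableSet_singleton y).compl.preimage (measurable_pi_apply 0)
  have h := hν 0 (Nat.zero_le N) ({ω | ω 0 ≠ y}.indicator 1)
    (measurable_const.indicator hS) ⟨1, fun ω => by by_cases hω : ω 0 = y <;> simp [hω]⟩
    (fun ω ω' h => by simp [Set.indicator_apply, h 0 le_rfl])
  rw [integral_indicator_one hS] at h
  have h0 : ν.real {ω | ω 0 ≠ y} = 0 := by simpa [Set.indicator_apply] using h
  exact ae_iff.2 ((measureReal_eq_zero_iff).1 h0)

theorem measureReal_preimage_revProj (hν : IsRevChainLaw N q y ν) (hP : P ≤ N)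
    {A : Set (Fin P → (Fin d → ℝ))} (hA : MeasurableSet A) :
    ν.real (revProj P ⁻¹' A) = ∫ z in A, revChainDensity q y P z := by
  have hS := measurable_revProj hA
  have h := hν P hP ((revProj P ⁻¹' A).indicator 1) (measurable_const.indicator hS)
    ⟨1, fun ω => by by_cases hω : ω ∈ revProj P ⁻¹' A <;> simp [hω]⟩
    fun ω ω' h => congrArg (A.indicator 1) (funext fun j => h _ j.isLt)
  rw [integral_indicator_one hS] at h
  rw [h, ← integral_indicator hA]
  congr 1 with z
  by_cases hz : z ∈ A <;> simp [hz]

theorem integrable_revChainDensity [IsProbabilityMeasure ν] (hν : IsRevChainLaw N q y ν)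
    (hP : P ≤ N) : Integrable (revChainDensity q y P) := by
  refine Integrable.of_integral_ne_zero ?_
  rw [← setIntegral_univ, ← hν.measureReal_preimage_revProj hP MeasurableSet.univ]
  simp

theorem map_revProj [IsProbabilityMeasure ν] (hν : IsRevChainLaw N q y ν) (hP : P ≤ N)
    (hq : ∀ m a b, 0 ≤ q m a b) :
    ν.map (revProj P) = volume.withDensity fun z => ENNReal.ofReal (revChainDensity q y P z) :=
  map_eq_withDensity_ofReal measurable_revProj (hν.integrable_revChainDensity hP)
    (.of_forall (revChainDensity_nonneg hq y P)) fun _ => hν.measureReal_preimage_revProj hP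

end IsRevChainLaw

end RevChain

section RevObservable

variable {d P : ℕ}

def revObservable (f : (Fin P → (Fin d → ℝ)) → ℝ) (w : ℕ → (Fin d → ℝ) → (Fin d → ℝ) → ℝ)
    (ω : ℕ → (Fin d → ℝ)) : ℝ :=
  f (fun j : Fin P => ω (P - (j : ℕ))) * ∏ k ∈ range P, w k (ω k) (ω (k + 1))

variable (f : (Fin P → (Fin d → ℝ)) → ℝ) {w : ℕ → (Fin d → ℝ) → (Fin d → ℝ) → ℝ}
  (y : Fin d → ℝ)

theorem revObservable_mul_prod {ψ q : ℕ → (Fin d → ℝ) → (Fin d → ℝ) → ℝ}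
    (hw : ∀ k < P, ∀ a b, ψ k a b * q k a b = w k a b) (ω : ℕ → (Fin d → ℝ)) :
    revObservable f ψ ω * ∏ k ∈ range P, q k (ω k) (ω (k + 1)) = revObservable f w ω := by
  rw [revObservable, revObservable, mul_assoc, ← prod_mul_distrib]
  exact congrArg _ (prod_congr rfl fun k hk => hw k (mem_range.1 hk) _ _)

theorem revObservable_revTraj_revProj {ω : ℕ → (Fin d → ℝ)} (h0 : ω 0 = y) :
    revObservable f w (revTraj y (revProj P ω)) = revObservable f w ω := by
  have hω : ∀ k ≤ P, revTraj y (revProj P ω) k = ω k := fun k hk => revTraj_revProj y h0 hk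
  unfold revObservable
  congr 1
  · exact congrArg f (funext fun j => hω _ (Nat.sub_le _ _))
  · exact prod_congr rfl fun k hk => by
      rw [hω k (mem_range.1 hk).le, hω (k + 1) (mem_range.1 hk)]

theorem measurable_revObservable_revTraj (hf : Measurable f)
    (hw : ∀ k, Measurable (Function.uncurry (w k))) :
    Measurable fun z : Fin P → (Fin d → ℝ) => revObservable f w (revTraj y z) :=
  (hf.comp (measurable_pi_lambda _ fun _ => measurable_revTraj_apply y _)).mul <|
    Finset.measurable_prod _ fun k _ =>
      (hw k).comp ((measurable_revTraj_apply y _).prodMk (measurable_revTraj_apply y _))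

theorem revObservable_revTraj_reverse (N : ℕ) (hP : P ≤ N)
    (p : ℕ → (Fin d → ℝ) → (Fin d → ℝ) → ℝ) (z : Fin P → (Fin d → ℝ)) :
    revObservable f (fun k a b => p (N - k - 1) b a) (revTraj y z) =
      f (fun j => z j.rev) * ∏ i : Fin P,
        p (N - P + i) ((Fin.snoc (fun j => z j.rev) y : Fin (P + 1) → Fin d → ℝ) i.castSucc)
          ((Fin.snoc (fun j => z j.rev) y : Fin (P + 1) → Fin d → ℝ) i.succ) := by
  unfold revObservable
  congr 1
  · refine congrArg f (funext fun j => ?_)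
    simpa using revTraj_sub_eq_snoc y z j.castSucc
  · rw [← Fin.prod_univ_eq_prod_range, ← Fintype.prod_equiv Fin.revPerm]
    intro i
    have hi := i.isLt
    rw [Fin.revPerm_apply, Fin.val_rev, ← revTraj_sub_eq_snoc, ← revTraj_sub_eq_snoc]
    dsimp only [Fin.val_castSucc, Fin.val_succ]
    rw [show N - (P - (i + 1)) - 1 = N - P + i by omega, show P - (i + 1) + 1 = P - i by omega]

end RevObservable

theorem integral_comp_finRev {X : Type*} [MeasureSpace X] [SigmaFinite (volume : Measure X)]
    {P : ℕ} (g : (Fin P → X) → ℝ) : ∫ z : Fin P → X, g (fun j => z j.rev) = ∫ z, g z :=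
  (volume_preserving_arrowCongr' Fin.revPerm (MeasurableEquiv.refl X)
    (MeasurePreserving.id volume)).integral_comp' g

theorem stmt3_general
    {d : ℕ} (N nstar : ℕ)
    (p1 : ℕ → (Fin d → ℝ) → (Fin d → ℝ) → ℝ)
    (hp1_meas : ∀ i, Measurable (Function.uncurry (p1 i)))
    (ψ : ℕ → (Fin d → ℝ) → (Fin d → ℝ) → ℝ)
    (q : ℕ → (Fin d → ℝ) → (Fin d → ℝ) → ℝ)
    (hψq : ∀ m, m < N → ∀ y z, ψ m y z * q m y z = p1 (N - m - 1) z y)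
    (hq_nonneg : ∀ m y z, 0 ≤ q m y z)
    (y : Fin d → ℝ)
    (ν : Measure (ℕ → (Fin d → ℝ))) [IsProbabilityMeasure ν]
    -- `ν` is the law of the reverse chain `Y^{y;N}` started at `y` with
    -- one-step transition densities `q`.
    (hlaw : ∀ (m : ℕ), m ≤ N → ∀ (F : (ℕ → (Fin d → ℝ)) → ℝ),
      Measurable F → (∃ C, ∀ ω, |F ω| ≤ C) →
      (∀ ω ω', (∀ k, k ≤ m → ω k = ω' k) → F ω = F ω') →
      ∫ ω, F ω ∂ν =
        ∫ z : Fin m → (Fin d → ℝ),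
          F (revTraj y z) *
            ∏ k ∈ Finset.range m, q k (revTraj y z k) (revTraj y z (k + 1)))
    (P : ℕ) (hP2 : P ≤ N - nstar)
    (f : (Fin P → (Fin d → ℝ)) → ℝ)
    (hf_meas : Measurable f) :
    (∫ ω, f (fun j : Fin P => ω (P - (j : ℕ))) *
        ∏ k ∈ Finset.range P, ψ k (ω k) (ω (k + 1)) ∂ν)
      = ∫ z : Fin P → (Fin d → ℝ),
          f z * ∏ i : Fin P,
            p1 (N - P + (i : ℕ))
              ((Fin.snoc z y : Fin (P + 1) → Fin d → ℝ) i.castSucc)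
              ((Fin.snoc z y : Fin (P + 1) → Fin d → ℝ) i.succ) := by
  have hν : IsRevChainLaw N q y ν := hlaw
  have hPN : P ≤ N := by omega
  have hψqp : ∀ z, revObservable f ψ (revTraj y z) * revChainDensity q y P z =
      revObservable f (fun k a b => p1 (N - k - 1) b a) (revTraj y z) :=
    fun z => revObservable_mul_prod f (fun k hk a b => hψq k (by omega) a b) (revTraj y z)
  have hp_meas : Measurable fun z =>
      revObservable f (fun k a b => p1 (N - k - 1) b a) (revTraj y z) :=
    measurable_revObservable_revTraj f y hf_meas fun k => (hp1_meas _).comp measurable_swap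
  have hQ : AEMeasurable (revChainDensity q y P) :=
    (hν.integrable_revChainDensity hPN).aemeasurable
  calc _ = ∫ ω, revObservable f ψ (revTraj y (revProj P ω)) ∂ν :=
        integral_congr_ae <| hν.ae_eq_start.mono fun ω h0 =>
          (revObservable_revTraj_revProj f y h0).symm
    _ = ∫ z, revObservable f ψ (revTraj y z) ∂(ν.map (revProj P)) := by
        refine (integral_map (f := fun z => revObservable f ψ (revTraj y z))
          measurable_revProj.aemeasurable ?_).symm
        rw [hν.map_revProj hPN hq_nonneg]
        exact aestronglyMeasurable_withDensity_ofReal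
          hp_meas.aemeasurable hQ (.of_forall hψqp)
    _ = ∫ z, revObservable f (fun k a b => p1 (N - k - 1) b a) (revTraj y z) := by
        rw [hν.map_revProj hPN hq_nonneg]
        exact integral_withDensity_ofReal_of_mul_ae_eq hQ
          (.of_forall (revChainDensity_nonneg hq_nonneg y P)) (.of_forall hψqp)
    _ = _ := by
        simp_rw [revObservable_revTraj_reverse f y N hPN p1]
        exact integral_comp_finRev fun z => f z * ∏ i : Fin P,
          p1 (N - P + i) ((Fin.snoc z y : Fin (P + 1) → Fin d → ℝ) i.castSucc)
            ((Fin.snoc z y : Fin (P + 1) → Fin d → ℝ) i.succ)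

/-- Induction identity (2) in the proof of the key theorem: for `1 ≤ P ≤ N - n⁎` and
bounded measurable `f_P : ℝ^{d×P} → ℝ`,
`E[f_P(Y_P^{y;N}, …, Y_1^{y;N}) 𝒴_P^{y;N}]
  = ∫ f_P(y_{N-P}, …, y_{N-1}) ∏_{i=N-P+1}^{N} p_{i-1}(y_{i-1}, y_i) dy_{N-P} ⋯ dy_{N-1}`
with `y_N := y`, where `p1 i = p_{i,i+1}` are the one-step transition densities.
In the right-hand side, `z j` encodes `y_{N-P+j}`. -/
theorem stmt3
    {d : ℕ} (N nstar : ℕ)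
    (p1 : ℕ → (Fin d → ℝ) → (Fin d → ℝ) → ℝ)
    (hp1_meas : ∀ i, Measurable (Function.uncurry (p1 i)))
    (hp1_nonneg : ∀ i x y, 0 ≤ p1 i x y)
    (ψ : ℕ → (Fin d → ℝ) → (Fin d → ℝ) → ℝ)
    (hψ_nonneg : ∀ m y z, 0 ≤ ψ m y z)
    (q : ℕ → (Fin d → ℝ) → (Fin d → ℝ) → ℝ)
    (hψq : ∀ m, m < N → ∀ y z, ψ m y z * q m y z = p1 (N - m - 1) z y)
    (hq_nonneg : ∀ m y z, 0 ≤ q m y z)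
    (hq_dens : ∀ m, m < N → ∀ y, (∫ z, q m y z) = 1)
    (y : Fin d → ℝ)
    (ν : Measure (ℕ → (Fin d → ℝ))) [IsProbabilityMeasure ν]
    -- `ν` is the law of the reverse chain `Y^{y;N}` started at `y` with
    -- one-step transition densities `q`.
    (hlaw : ∀ (m : ℕ), m ≤ N → ∀ (F : (ℕ → (Fin d → ℝ)) → ℝ),
      Measurable F → (∃ C, ∀ ω, |F ω| ≤ C) →
      (∀ ω ω', (∀ k, k ≤ m → ω k = ω' k) → F ω = F ω') →
      ∫ ω, F ω ∂ν =
        ∫ z : Fin m → (Fin d → ℝ),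
          F (revTraj y z) *
            ∏ k ∈ Finset.range m, q k (revTraj y z k) (revTraj y z (k + 1)))
    (P : ℕ) (hP1 : 1 ≤ P) (hP2 : P ≤ N - nstar)
    (f : (Fin P → (Fin d → ℝ)) → ℝ)
    (hf_meas : Measurable f) (hf_bdd : ∃ C, ∀ v, |f v| ≤ C) :
    (∫ ω, f (fun j : Fin P => ω (P - (j : ℕ))) *
        ∏ k ∈ Finset.range P, ψ k (ω k) (ω (k + 1)) ∂ν)
      = ∫ z : Fin P → (Fin d → ℝ),
          f z * ∏ i : Fin P,
            p1 (N - P + (i : ℕ))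
              ((Fin.snoc z y : Fin (P + 1) → Fin d → ℝ) i.castSucc)
              ((Fin.snoc z y : Fin (P + 1) → Fin d → ℝ) i.succ) :=
  stmt3_general N nstar p1 hp1_meas ψ q hψq hq_nonneg y ν hlaw P hP2 f hf_meas
end

section
/- Let $X$ be a random variable supported in a compact set $D \subset \mathbb{R}^d$ with density $p$ bounded by $\|p\|_\infty$. For each $K \in \mathbb{N}$, let $B_1^K, \ldots, B_K^K$ be a measurable partition of $D$ into sets of equal Lebesgue measure $\lambda(D)/K$. Let $X_1, \ldots, X_N$ be i.i.d. copies of $X$ and $N_k := \#\{i \le N : X_i \in B_k^K\}$. Then, as $N, K \to \infty$ with $N = O(K)$, $\mathbb{E}[\max_{k=1,\ldots,K} N_k] = O(\log N / \log\log N)$. -/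
/-
The density bound gives bin probabilities at most `a / K` with `a = ‖p‖∞ λ(D)`. A union bound
over the bins and over the `t`-subsets of samples that could share a bin gives, for `N ≤ c K`,
`P(max_k N_k ≥ t) ≤ K · C(N, t) · (a / K) ^ t ≤ N · b ^ t / t!` with `b = (a + 1) c`.
At `t = 2m`, using `(2m)! ≥ m ^ m`, this is at most `N · (b² / m) ^ m`, which falls below `N⁻²`
once `m ≥ 4 log N / log log N`; as `max_k N_k ≤ N`, the expectation is then at most `2m + 1`.
-/

open MeasureTheory ProbabilityTheory Filter Finset Real
open scoped Classical ENNReal Nat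

lemma Nat.pow_self_le_factorial_two_mul (m : ℕ) : m ^ m ≤ (2 * m)! :=
  calc m ^ m ≤ m ! * (m + 1) ^ m :=
        (Nat.pow_le_pow_left m.le_succ m).trans (Nat.le_mul_of_pos_left _ m.factorial_pos)
    _ ≤ (2 * m)! := two_mul m ▸ Nat.factorial_mul_pow_le_factorial

lemma mul_choose_mul_div_pow_le {a b : ℝ} {N K t : ℕ} (ha : 0 ≤ a) (hab : a ≤ b)
    (haN : a * N ≤ b * K) (hK : 0 < K) (ht : 0 < t) :
    K * (N.choose t * (a / K) ^ t) ≤ N * b ^ t / t ! := by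
  obtain ⟨s, rfl⟩ : ∃ s, t = s + 1 := ⟨t - 1, by omega⟩
  have hKR : (0 : ℝ) < K := by exact_mod_cast hK
  have hb : 0 ≤ b := ha.trans hab
  calc (K : ℝ) * (N.choose (s + 1) * (a / K) ^ (s + 1))
      ≤ K * (N ^ (s + 1) / (s + 1) ! * (a / K) ^ (s + 1)) := by
        gcongr; exact Nat.choose_le_pow_div _ _
    _ = a * N * (a * N / K) ^ s / (s + 1) ! := by
        rw [div_pow, div_pow]; field_simp; ring
    _ ≤ b * N * b ^ s / (s + 1) ! := by
        gcongr; exact (div_le_iff₀ hKR).2 haN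
    _ = N * b ^ (s + 1) / (s + 1) ! := by ring

lemma sq_mul_div_pow_le_one {x B : ℝ} {m : ℕ} (hx : 0 < x) (hB : 0 < B) (hm : 0 < m)
    (h : 2 * log x ≤ m * log (m / B)) : x ^ 2 * (B / m) ^ m ≤ 1 := by
  have hmB : 0 < (m : ℝ) / B := by positivity
  have hpow : x ^ 2 ≤ ((m : ℝ) / B) ^ m := by
    rwa [← log_le_log_iff (by positivity) (by positivity), Real.log_pow, Real.log_pow,
      Nat.cast_ofNat]
  rw [← inv_div, inv_pow, ← div_eq_mul_inv]
  exact div_le_one_of_le₀ hpow (by positivity)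

lemma tendsto_log_log_atTop : Tendsto (fun x => log (log x)) atTop atTop :=
  tendsto_log_atTop.comp tendsto_log_atTop

lemma eventually_one_le_log_div_log_log : ∀ᶠ x : ℝ in atTop, 1 ≤ log x / log (log x) := by
  filter_upwards [tendsto_log_log_atTop.eventually_gt_atTop 0,
    tendsto_log_atTop.eventually_gt_atTop 0] with x hy hl
  exact (one_le_div hy).2 (log_le_self hl.le)

/-- With `L = log x / log log x` one has `log L = log log x - log log log x`, so every
`m ≥ 4 L` has `log (m / B) ≥ (log log x) / 2` for large `x`. -/
lemma eventually_two_mul_log_le_mul_log {B : ℝ} (hB : 0 < B) :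
    ∀ᶠ x : ℝ in atTop, ∀ m : ℝ, 4 * (log x / log (log x)) ≤ m →
      2 * log x ≤ m * log (m / B) := by
  have hsmall : ∀ᶠ y : ℝ in atTop, log y + log B ≤ y / 2 := by
    filter_upwards [isLittleO_log_id_atTop.def (c := 1 / 4) (by norm_num),
      eventually_ge_atTop 0, eventually_ge_atTop (4 * log B)] with y hy hy0 hyB
    rw [norm_eq_abs, norm_eq_abs, id, abs_of_nonneg hy0] at hy
    linarith [le_abs_self (log y)]
  filter_upwards [tendsto_log_log_atTop.eventually hsmall,
    tendsto_log_log_atTop.eventually_gt_atTop 0, eventually_one_le_log_div_log_log]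
    with x hsmall hy hL m hm
  set y := log (log x)
  set L := log x / y
  have hL0 : 0 < L := by linarith
  have hm0 : 0 < m := by linarith
  have hLy : L * y = log x := div_mul_cancel₀ _ hy.ne'
  have hlogL : log L = y - log y := log_div (by nlinarith) hy.ne'
  have hlogm : y / 2 ≤ log (m / B) := by
    rw [log_div hm0.ne' hB.ne']
    have := log_le_log hL0 (by linarith : L ≤ m)
    linarith
  calc 2 * log x = 4 * L * (y / 2) := by linear_combination (-2) * hLy
    _ ≤ m * log (m / B) := by gcongr

lemma integral_le_add_mul_measureReal {Ω : Type*} [MeasurableSpace Ω] {P : Measure Ω}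
    [IsProbabilityMeasure P] {f : Ω → ℝ} (hf : Measurable f) (hf0 : ∀ ω, 0 ≤ f ω)
    {s M : ℝ} (hs : 0 ≤ s) (hfM : ∀ ω, f ω ≤ M) :
    ∫ ω, f ω ∂P ≤ s + M * P.real {ω | s ≤ f ω} := by
  set T := {ω | s ≤ f ω}
  have hT : MeasurableSet T := measurableSet_le measurable_const hf
  have hpt : ∀ ω, f ω ≤ s + M * T.indicator 1 ω := by
    intro ω
    by_cases hω : ω ∈ T
    · rw [Set.indicator_of_mem hω, Pi.one_apply, mul_one]
      linarith [hfM ω]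
    · rw [Set.indicator_of_notMem hω, mul_zero, add_zero]
      exact (not_le.1 hω).le
  have hind : Integrable (fun ω => M * T.indicator 1 ω) P :=
    ((integrable_const (1:ℝ)).indicator hT).const_mul M
  calc ∫ ω, f ω ∂P ≤ ∫ ω, (s + M * T.indicator 1 ω) ∂P :=
        integral_mono_of_nonneg (ae_of_all _ hf0) ((integrable_const s).add hind)
          (ae_of_all _ hpt)
    _ = s + M * P.real T := by
        rw [integral_add (integrable_const s) hind, integral_const_mul,
          integral_indicator_one hT, integral_const, probReal_univ, one_smul]

lemma withDensity_apply_le_mul {α : Type*} [MeasurableSpace α] (μ : Measure α)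
    {f : α → ℝ≥0∞} {C : ℝ≥0∞} (hf : ∀ x, f x ≤ C) (s : Set α) :
    μ.withDensity f s ≤ C * μ s := by
  simpa [withDensity_const] using withDensity_mono (μ := μ) (ae_of_all _ hf) s

namespace BallsInBins

variable {Ω E ι : Type*} [Fintype ι]

noncomputable def hitCount (X : ℕ → Ω → E) (A : Set E) (N : ℕ) (ω : Ω) : ℕ :=
  #{i ∈ range N | X i ω ∈ A}

noncomputable def maxLoad (X : ℕ → Ω → E) (B : ι → Set E) (N : ℕ) (ω : Ω) : ℕ :=
  univ.sup fun k => hitCount X (B k) N ω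

lemma hitCount_le (X : ℕ → Ω → E) (A : Set E) (N : ℕ) (ω : Ω) :
    hitCount X A N ω ≤ N :=
  (card_filter_le _ _).trans (card_range N).le

lemma maxLoad_le (X : ℕ → Ω → E) (B : ι → Set E) (N : ℕ) (ω : Ω) :
    maxLoad X B N ω ≤ N :=
  Finset.sup_le fun k _ => hitCount_le X (B k) N ω

variable [MeasurableSpace Ω] [MeasurableSpace E] {X : ℕ → Ω → E}

lemma measurable_hitCount (hX : ∀ i, Measurable (X i)) {A : Set E} (hA : MeasurableSet A)
    (N : ℕ) : Measurable (hitCount X A N) := by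
  rw [show hitCount X A N = fun ω => ∑ i ∈ range N, if X i ω ∈ A then 1 else 0 from
    funext fun ω => card_filter _ _]
  exact Finset.measurable_sum _ fun i _ =>
    Measurable.ite (hX i hA) measurable_const measurable_const

lemma measurable_maxLoad (hX : ∀ i, Measurable (X i)) {B : ι → Set E}
    (hB : ∀ k, MeasurableSet (B k)) (N : ℕ) : Measurable (maxLoad X B N) := by
  unfold maxLoad
  induction (univ : Finset ι) using Finset.induction_on with
  | empty => exact measurable_const
  | insert k s _ ih => simpa only [sup_insert] using (measurable_hitCount hX (hB k) N).max ih

lemma _root_.ProbabilityTheory.iIndepFun.measure_le_hitCount_le {P : Measure Ω}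
    (hindep : iIndepFun X P) {A : Set E} (hA : MeasurableSet A) {q : ℝ≥0∞}
    (hq : ∀ i, P (X i ⁻¹' A) ≤ q) (N t : ℕ) :
    P {ω | t ≤ hitCount X A N ω} ≤ N.choose t * q ^ t := by
  have hsub : {ω | t ≤ hitCount X A N ω} ⊆
      ⋃ S ∈ (range N).powersetCard t, ⋂ i ∈ S, X i ⁻¹' A := by
    intro ω hω
    obtain ⟨S, hS, hcard⟩ := exists_subset_card_eq hω
    refine Set.mem_biUnion (mem_powersetCard.2 ⟨hS.trans (filter_subset _ _), hcard⟩) ?_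
    exact Set.mem_iInter₂.2 fun i hi => (mem_filter.1 (hS hi)).2
  calc P {ω | t ≤ hitCount X A N ω}
      ≤ ∑ S ∈ (range N).powersetCard t, P (⋂ i ∈ S, X i ⁻¹' A) :=
        (measure_mono hsub).trans (measure_biUnion_finset_le _ _)
    _ ≤ ∑ _S ∈ (range N).powersetCard t, q ^ t := by
        refine sum_le_sum fun S hS => ?_
        rw [hindep.meas_biInter fun i _ => ⟨A, hA, rfl⟩, ← (mem_powersetCard.1 hS).2,
          ← prod_const]
        exact prod_le_prod' fun i _ => hq i
    _ = N.choose t * q ^ t := by rw [sum_const, card_powersetCard, card_range, nsmul_eq_mul]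

lemma _root_.ProbabilityTheory.iIndepFun.measure_le_maxLoad_le {P : Measure Ω}
    (hindep : iIndepFun X P) {B : ι → Set E} (hB : ∀ k, MeasurableSet (B k)) {q : ℝ≥0∞}
    (hq : ∀ k i, P (X i ⁻¹' B k) ≤ q) (N : ℕ) {t : ℕ} (ht : 0 < t) :
    P {ω | t ≤ maxLoad X B N ω} ≤ Fintype.card ι * (N.choose t * q ^ t) := by
  have hsub : {ω | t ≤ maxLoad X B N ω} ⊆
      ⋃ k ∈ (univ : Finset ι), {ω | t ≤ hitCount X (B k) N ω} := by
    intro ω hω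
    obtain ⟨k, -, hk⟩ := (Finset.le_sup_iff ht).1 hω
    exact Set.mem_biUnion (mem_univ k) hk
  calc P {ω | t ≤ maxLoad X B N ω}
      ≤ ∑ k, P {ω | t ≤ hitCount X (B k) N ω} :=
        (measure_mono hsub).trans (measure_biUnion_finset_le _ _)
    _ ≤ ∑ _k : ι, N.choose t * q ^ t :=
        sum_le_sum fun k _ => hindep.measure_le_hitCount_le (hB k) (hq k) N t
    _ = Fintype.card ι * (N.choose t * q ^ t) := by
        rw [sum_const, Finset.card_univ, nsmul_eq_mul]

lemma integral_maxLoad_le {P : Measure Ω} [IsProbabilityMeasure P]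
    (hX : ∀ i, Measurable (X i)) (hindep : iIndepFun X P) {B : ι → Set E}
    (hB : ∀ k, MeasurableSet (B k)) {a b : ℝ} (ha : 0 ≤ a) (hab : a ≤ b) {N : ℕ}
    (haN : a * N ≤ b * Fintype.card ι) (hι : 0 < Fintype.card ι)
    (hq : ∀ k i, P (X i ⁻¹' B k) ≤ ENNReal.ofReal (a / Fintype.card ι))
    {m : ℕ} (hm : 0 < m) :
    ∫ ω, (maxLoad X B N ω : ℝ) ∂P ≤ 2 * m + N * (N * (b ^ 2 / m) ^ m) := by
  set K := Fintype.card ι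
  have htail : P.real {ω | 2 * m ≤ maxLoad X B N ω} ≤ N * (b ^ 2 / m) ^ m := by
    calc P.real {ω | 2 * m ≤ maxLoad X B N ω}
        ≤ K * (N.choose (2 * m) * (a / K) ^ (2 * m)) := by
          refine ENNReal.toReal_le_of_le_ofReal (by positivity) ?_
          rw [ENNReal.ofReal_mul (by positivity), ENNReal.ofReal_mul (by positivity),
            ENNReal.ofReal_pow (by positivity), ENNReal.ofReal_natCast, ENNReal.ofReal_natCast]
          exact hindep.measure_le_maxLoad_le hB hq N (by omega)
      _ ≤ N * b ^ (2 * m) / (2 * m) ! := mul_choose_mul_div_pow_le ha hab haN hι (by omega)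
      _ ≤ N * b ^ (2 * m) / m ^ m := by
          have hb : 0 ≤ b := ha.trans hab
          gcongr
          exact_mod_cast Nat.pow_self_le_factorial_two_mul m
      _ = N * (b ^ 2 / m) ^ m := by rw [pow_mul, div_pow]; ring
  calc ∫ ω, (maxLoad X B N ω : ℝ) ∂P
      ≤ ((2 * m : ℕ) : ℝ) + N * P.real {ω | ((2 * m : ℕ) : ℝ) ≤ maxLoad X B N ω} :=
        integral_le_add_mul_measureReal (measurable_from_top.comp (measurable_maxLoad hX hB N))
          (fun ω => Nat.cast_nonneg _) (Nat.cast_nonneg _)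
          (fun ω => Nat.cast_le.2 (maxLoad_le X B N ω))
    _ ≤ 2 * m + N * (N * (b ^ 2 / m) ^ m) := by
        simp only [Nat.cast_le]
        push_cast
        gcongr

end BallsInBins

open BallsInBins

theorem stmt4_general
    {d : ℕ} {Ω : Type*} [MeasureSpace Ω] [IsProbabilityMeasure (ℙ : Measure Ω)]
    (D : Set (Fin d → ℝ)) (hD : IsCompact D)
    (pdens : (Fin d → ℝ) → ℝ≥0∞)
    (Cp : ℝ≥0∞) (hCp : Cp ≠ ⊤) (hpdens_bdd : ∀ x, pdens x ≤ Cp)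
    (μ : Measure (Fin d → ℝ)) (hμ : μ = volume.withDensity pdens)
    (B : (K : ℕ) → Fin K → Set (Fin d → ℝ))
    (hB_meas : ∀ K k, MeasurableSet (B K k))
    (hB_vol : ∀ K, 0 < K → ∀ k, volume (B K k) = volume D / K)
    (X : ℕ → Ω → (Fin d → ℝ)) (hX_meas : ∀ i, Measurable (X i))
    (hX_law : ∀ i, Measure.map (X i) ℙ = μ)
    (hX_indep : iIndepFun X ℙ)
    -- the number of bins `K N` used for sample size `N`, with `N = O(K N)`
    (K : ℕ → ℕ) (hNK : ∃ c : ℝ, ∀ N : ℕ, (N : ℝ) ≤ c * K N) :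
    ∃ C : ℝ, ∀ᶠ N : ℕ in Filter.atTop,
      (∫ ω, ((Finset.univ.sup fun k : Fin (K N) =>
          (Finset.filter (fun i => X i ω ∈ B (K N) k) (Finset.range N)).card : ℕ) : ℝ))
        ≤ C * (Real.log N / Real.log (Real.log N)) := by
  obtain ⟨c₀, hc₀⟩ := hNK
  set a := (Cp * volume D).toReal
  set b := (a + 1) * max c₀ 1
  have hb : 0 < b := by positivity
  have hq : ∀ N, 0 < K N → ∀ k i,
      ℙ (X i ⁻¹' B (K N) k) ≤ ENNReal.ofReal (a / K N) := by
    intro N hK k i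
    rw [← Measure.map_apply (hX_meas i) (hB_meas _ _), hX_law, hμ,
      ENNReal.ofReal_div_of_pos (by exact_mod_cast hK), ENNReal.ofReal_natCast,
      ENNReal.ofReal_toReal (ENNReal.mul_ne_top hCp hD.measure_lt_top.ne), mul_div_assoc,
      ← hB_vol _ hK k]
    exact withDensity_apply_le_mul _ hpdens_bdd _
  refine ⟨11, ?_⟩
  filter_upwards [tendsto_natCast_atTop_atTop.eventually
      (eventually_two_mul_log_le_mul_log (pow_pos hb 2)),
    tendsto_natCast_atTop_atTop.eventually eventually_one_le_log_div_log_log,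
    eventually_gt_atTop 0] with N hlog hL hN
  set L := log N / log (log N)
  have hK : 0 < K N := Nat.pos_of_ne_zero fun h => by
    have := hc₀ N
    simp only [h, CharP.cast_eq_zero, mul_zero, Nat.cast_nonpos] at this
    omega
  have haN : a * N ≤ b * K N :=
    calc a * N ≤ (a + 1) * (max c₀ 1 * K N) := by
          gcongr
          · linarith
          · exact (hc₀ N).trans (by gcongr; exact le_max_left _ _)
      _ = b * K N := by ring
  set m := ⌈4 * L⌉₊
  have hm : 0 < m := Nat.ceil_pos.2 (by positivity)
  have hmL : (m : ℝ) < 4 * L + 1 := Nat.ceil_lt_add_one (by positivity)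
  have hsmall : (N : ℝ) * (N * (b ^ 2 / m) ^ m) ≤ 1 := by
    rw [← mul_assoc, ← sq]
    exact sq_mul_div_pow_le_one (by positivity) (by positivity) hm (hlog m (Nat.le_ceil _))
  calc ∫ ω, (maxLoad X (B (K N)) N ω : ℝ)
      ≤ 2 * m + N * (N * (b ^ 2 / m) ^ m) :=
        integral_maxLoad_le (a := a) hX_meas hX_indep (hB_meas (K N)) (by positivity)
          (by nlinarith [le_max_right c₀ 1])
          (by simpa using haN) (by simpa using hK) (by simpa using hq N hK) hm
    _ ≤ 11 * L := by linarith

/-- Balls-in-bins complexity lemma: if `X₁, …, X_N` are i.i.d. with a bounded density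
supported in a compact set `D ⊂ ℝᵈ`, `B K 1, …, B K K` is a measurable partition of `D`
into sets of equal Lebesgue measure `λ(D)/K`, and `N_k` counts samples in bin `k`, then
as `N, K → ∞` with `N = O(K)` one has `E[max_k N_k] = O(log N / log log N)`. -/
theorem stmt4
    {d : ℕ} {Ω : Type*} [MeasureSpace Ω] [IsProbabilityMeasure (ℙ : Measure Ω)]
    (D : Set (Fin d → ℝ)) (hD : IsCompact D)
    (pdens : (Fin d → ℝ) → ℝ≥0∞) (hpdens_meas : Measurable pdens)
    (Cp : ℝ≥0∞) (hCp : Cp ≠ ⊤) (hpdens_bdd : ∀ x, pdens x ≤ Cp)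
    (μ : Measure (Fin d → ℝ)) (hμ : μ = volume.withDensity pdens)
    (hμ_prob : IsProbabilityMeasure μ) (hsupp : μ Dᶜ = 0)
    (B : (K : ℕ) → Fin K → Set (Fin d → ℝ))
    (hB_meas : ∀ K k, MeasurableSet (B K k))
    (hB_disj : ∀ K, Pairwise (Function.onFun Disjoint (B K)))
    (hB_cover : ∀ K, 0 < K → (⋃ k, B K k) = D)
    (hB_vol : ∀ K, 0 < K → ∀ k, volume (B K k) = volume D / K)
    (X : ℕ → Ω → (Fin d → ℝ)) (hX_meas : ∀ i, Measurable (X i))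
    (hX_law : ∀ i, Measure.map (X i) ℙ = μ)
    (hX_indep : iIndepFun X ℙ)
    -- the number of bins `K N` used for sample size `N`, with `N = O(K N)`
    (K : ℕ → ℕ) (hNK : ∃ c : ℝ, ∀ N : ℕ, (N : ℝ) ≤ c * K N) :
    ∃ C : ℝ, ∀ᶠ N : ℕ in Filter.atTop,
      (∫ ω, ((Finset.univ.sup fun k : Fin (K N) =>
          (Finset.filter (fun i => X i ω ∈ B (K N) k) (Finset.range N)).card : ℕ) : ℝ))
        ≤ C * (Real.log N / Real.log (Real.log N)) :=
  stmt4_general D hD pdens Cp hCp hpdens_bdd μ hμ B hB_meas hB_vol X hX_meas hX_law hX_indep K hNK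
end

section
/- Let $(M_1, \ldots, M_{K'})$ be multinomial with parameters $N$, $K'$, and uniform probabilities $(1/K', \ldots, 1/K')$, and let $(N_1, \ldots, N_K)$ be multinomial with parameters $N$, $K$, and probabilities $(p_1, \ldots, p_K)$ satisfying $p_k \le 1/K'$ for all $k$ (where $K' \le K$). Then $\mathbb{E}[\max_{k=1,\ldots,K} N_k] \le \mathbb{E}[\max_{k=1,\ldots,K'} M_k]$. -/
/-!
Write `E(q) = ∑ₓ (∏ᵢ q (x i)) · maxCount x`, summed over all assignments `x` of balls to cells.
Moving mass from a cell `a` to a cell `b` with `q a ≤ q b` does not decrease `E`. Along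
`q a = u`, `q b = s - u` the derivative of `E` is a sum, over configurations `x` and balls `i`
lying in `a`, of the weight of the other balls times `maxCount x - maxCount (x with i moved to b)`.
Exchanging the labels `a` and `b` pairs each term with one whose difference has the opposite
sign. Of the two, the term in which ball `i` sits in the cell holding fewer other balls has the
larger weight (as `u ≤ s - u`) and the nonpositive difference, so every pair is nonpositive.

Such transfers remove cells with `0 < q k < 1/K'` one at a time. Exactly one such cell is
impossible when `∑ q = 1`, and with none left `q` is the uniform distribution on `K'` cells,
padded by zeros, which has the same `E`.
-/

open MeasureTheory ProbabilityTheory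
open scoped ENNReal

namespace MultinomialMax

open Finset Function

lemma pow_mul_pow_le_pow_mul_pow {R : Type*} [CommSemiring R] [PartialOrder R] [IsOrderedRing R]
    {u v : R} (hu : 0 ≤ u) (huv : u ≤ v) {j l : ℕ} (hjl : j ≤ l) :
    u ^ l * v ^ j ≤ u ^ j * v ^ l := by
  obtain ⟨d, rfl⟩ := Nat.exists_eq_add_of_le hjl
  have hv : 0 ≤ v := hu.trans huv
  calc u ^ (j + d) * v ^ j = u ^ j * v ^ j * u ^ d := by ring
    _ ≤ u ^ j * v ^ j * v ^ d := by gcongr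
    _ = u ^ j * v ^ (j + d) := by ring

lemma sum_nonpos_of_involution {γ M : Type*} [AddCommMonoid M] [LinearOrder M]
    [IsOrderedAddMonoid M] {s : Finset γ} {f : γ → M} (g : γ → γ)
    (hg : ∀ x ∈ s, g x ∈ s) (hgg : ∀ x ∈ s, g (g x) = x)
    (h : ∀ x ∈ s, f x + f (g x) ≤ 0) : ∑ x ∈ s, f x ≤ 0 := by
  have hperm : ∑ x ∈ s, f (g x) = ∑ x ∈ s, f x := sum_nbij' g g hg hg hgg hgg fun _ _ => rfl
  have hpair : ∑ x ∈ s, (f x + f (g x)) ≤ 0 := sum_nonpos h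
  rw [sum_add_distrib, hperm] at hpair
  exact add_self_nonpos_iff.mp hpair

lemma update_swap_comp_update {ι α : Type*} [DecidableEq ι] [DecidableEq α] {x : ι → α}
    {i : ι} {a b : α} (hxi : x i = a) :
    update (Equiv.swap a b ∘ update x i b) i b = Equiv.swap a b ∘ x := by
  funext j
  by_cases hj : j = i
  · subst hj; simp [hxi]
  · simp [update_of_ne hj]

section Counts

variable {ι α β : Type*} [Fintype ι] [DecidableEq α]

def cellCount (x : ι → α) (k : α) : ℕ := #{i | x i = k}

def maxCount [Fintype α] (x : ι → α) : ℕ := univ.sup (cellCount x)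

lemma cellCount_le_maxCount [Fintype α] (x : ι → α) (k : α) : cellCount x k ≤ maxCount x :=
  le_sup (mem_univ k)

lemma cellCount_comp_of_injective [DecidableEq β] {f : α → β} (hf : Injective f) (x : ι → α)
    (k : α) : cellCount (f ∘ x) (f k) = cellCount x k := by
  simp [cellCount, hf.eq_iff]

lemma cellCount_eq_zero_of_notMem_range {x : ι → α} {k : α} (hk : k ∉ Set.range x) :
    cellCount x k = 0 := by
  simp only [cellCount, card_eq_zero, filter_eq_empty_iff]
  exact fun i _ h => hk ⟨i, h⟩

lemma maxCount_comp_of_injective [Fintype α] [Fintype β] [DecidableEq β] {f : α → β}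
    (hf : Injective f) (x : ι → α) : maxCount (f ∘ x) = maxCount x := by
  apply le_antisymm
  · refine Finset.sup_le fun k _ => ?_
    by_cases hk : k ∈ Set.range f
    · obtain ⟨k, rfl⟩ := hk
      rw [cellCount_comp_of_injective hf]
      exact cellCount_le_maxCount x k
    · have hk' : k ∉ Set.range (f ∘ x) := fun ⟨i, hi⟩ => hk ⟨x i, hi⟩
      simp [cellCount_eq_zero_of_notMem_range hk']
  · refine Finset.sup_le fun k _ => ?_
    rw [← cellCount_comp_of_injective hf x k]
    exact cellCount_le_maxCount _ _

lemma cellCount_swap_comp_of_ne {a b k : α} (hka : k ≠ a) (hkb : k ≠ b) (x : ι → α) :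
    cellCount (Equiv.swap a b ∘ x) k = cellCount x k := by
  conv_lhs => rw [← Equiv.swap_apply_of_ne_of_ne hka hkb]
  exact cellCount_comp_of_injective (Equiv.injective _) x k

variable [DecidableEq ι]

lemma cellCount_update_add (x : ι → α) (i : ι) (b k : α) :
    cellCount (update x i b) k + (if x i = k then 1 else 0)
      = cellCount x k + (if b = k then 1 else 0) := by
  simp only [cellCount, card_filter]
  have hupd : (fun j => if update x i b j = k then 1 else 0)
      = update (fun j => if x j = k then 1 else 0) i (if b = k then 1 else 0) := by
    funext j
    exact apply_update (fun _ c => if c = k then 1 else 0) x i b j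
  rw [hupd, sum_update_of_mem (mem_univ i), sum_eq_add_sum_sdiff_singleton_of_mem (mem_univ i)]
  ring

lemma cellCount_update_apply_add_one {x : ι → α} {i : ι} {b : α} (hib : x i ≠ b) :
    cellCount (update x i b) (x i) + 1 = cellCount x (x i) := by
  simpa [hib.symm] using cellCount_update_add x i b (x i)

lemma cellCount_update_self {x : ι → α} {i : ι} {b : α} (hib : x i ≠ b) :
    cellCount (update x i b) b = cellCount x b + 1 := by
  simpa [hib] using cellCount_update_add x i b b

lemma maxCount_le_maxCount_update [Fintype α] {x : ι → α} {i : ι} {b : α}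
    (h : cellCount x (x i) ≤ cellCount x b + 1) : maxCount x ≤ maxCount (update x i b) := by
  refine Finset.sup_le fun k _ => ?_
  by_cases hki : x i = k
  · subst hki
    have hxb : cellCount x (x i) ≤ cellCount (update x i b) b := by
      by_cases hib : x i = b
      · rw [← hib, update_eq_self]
      · rw [cellCount_update_self hib]
        exact h
    exact hxb.trans (cellCount_le_maxCount _ b)
  · have hk := cellCount_update_add x i b k
    rw [if_neg hki] at hk
    exact (show cellCount x k ≤ _ by omega).trans (cellCount_le_maxCount _ k)

end Counts

def expectedMaxCount (ι : Type*) {α : Type*} [Fintype ι] [DecidableEq ι] [Fintype α]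
    [DecidableEq α] (q : α → ℝ) : ℝ :=
  ∑ x : ι → α, (∏ i, q (x i)) * maxCount x

section TwoCells

variable {ι α : Type*} [Fintype ι] [Fintype α] [DecidableEq α]

lemma prod_apply_eq_prod_pow_cellCount {M : Type*} [CommMonoid M] (q : α → M) (x : ι → α) :
    ∏ i, q (x i) = ∏ k, q k ^ cellCount x k := by
  rw [← prod_fiberwise' univ x q]
  simp only [prod_const, cellCount]

def outerWeight (q : α → ℝ) (a b : α) (x : ι → α) : ℝ :=
  ∏ k ∈ {a, b}ᶜ, q k ^ cellCount x k

variable {q : α → ℝ} {a b : α}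

lemma prod_update_update (q : α → ℝ) (hab : a ≠ b) (u v : ℝ) (x : ι → α) :
    ∏ i, update (update q a u) b v (x i)
      = u ^ cellCount x a * v ^ cellCount x b * outerWeight q a b x := by
  rw [prod_apply_eq_prod_pow_cellCount, ← prod_mul_prod_compl {a, b}, prod_pair hab,
    outerWeight, update_of_ne hab, update_self, update_self]
  congr 1
  refine prod_congr rfl fun k hk => ?_
  simp only [mem_compl, mem_insert, mem_singleton, not_or] at hk
  rw [update_of_ne hk.2, update_of_ne hk.1]

lemma outerWeight_nonneg (hq : 0 ≤ q) (x : ι → α) : 0 ≤ outerWeight q a b x :=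
  prod_nonneg fun k _ => pow_nonneg (hq k) _

lemma outerWeight_congr {x y : ι → α}
    (h : ∀ k, k ≠ a → k ≠ b → cellCount x k = cellCount y k) :
    outerWeight q a b x = outerWeight q a b y := by
  refine prod_congr rfl fun k hk => ?_
  simp only [mem_compl, mem_insert, mem_singleton, not_or] at hk
  rw [h k hk.1 hk.2]

lemma outerWeight_swap_comp (x : ι → α) :
    outerWeight q a b (Equiv.swap a b ∘ x) = outerWeight q a b x :=
  outerWeight_congr fun _ hka hkb => cellCount_swap_comp_of_ne hka hkb x

variable [DecidableEq ι]

lemma outerWeight_update {x : ι → α} {i : ι} (hxi : x i = a) :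
    outerWeight q a b (update x i b) = outerWeight q a b x :=
  outerWeight_congr fun k hka hkb => by
    simpa [hxi, Ne.symm hka, Ne.symm hkb] using cellCount_update_add x i b k

def moveTerm (q : α → ℝ) (a b : α) (u v : ℝ) (i : ι) (x : ι → α) : ℝ :=
  u ^ (cellCount x a - 1) * v ^ cellCount x b * outerWeight q a b x *
    ((maxCount x : ℝ) - maxCount (update x i b))

lemma moveTerm_add_moveTerm_swap_nonpos (hq : 0 ≤ q) (hab : a ≠ b) {u v : ℝ} (hu : 0 ≤ u)
    (huv : u ≤ v) {x : ι → α} {i : ι} (hxi : x i = a) :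
    moveTerm q a b u v i x + moveTerm q a b u v i (Equiv.swap a b ∘ update x i b) ≤ 0 := by
  have hib : x i ≠ b := hxi ▸ hab
  have hya := cellCount_update_apply_add_one hib
  have hyb := cellCount_update_self hib
  rw [hxi] at hya
  have hza : cellCount (Equiv.swap a b ∘ update x i b) a = cellCount (update x i b) b := by
    simpa using cellCount_comp_of_injective (Equiv.swap a b).injective (update x i b) b
  have hzb : cellCount (Equiv.swap a b ∘ update x i b) b = cellCount (update x i b) a := by
    simpa using cellCount_comp_of_injective (Equiv.swap a b).injective (update x i b) a
  set j := cellCount x a - 1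
  set l := cellCount x b
  have hsum : moveTerm q a b u v i x + moveTerm q a b u v i (Equiv.swap a b ∘ update x i b)
      = outerWeight q a b x * (((maxCount x : ℝ) - maxCount (update x i b))
          * (u ^ j * v ^ l - u ^ l * v ^ j)) := by
    simp only [moveTerm, hza, hzb, update_swap_comp_update hxi,
      maxCount_comp_of_injective (Equiv.swap a b).injective, outerWeight_swap_comp,
      outerWeight_update hxi]
    rw [show cellCount (update x i b) b - 1 = l by omega,
      show cellCount (update x i b) a = j by omega]
    ring
  rw [hsum]
  refine mul_nonpos_of_nonneg_of_nonpos (outerWeight_nonneg hq x) ?_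
  rcases le_or_gt j l with hjl | hlj
  · have hM : maxCount x ≤ maxCount (update x i b) :=
      maxCount_le_maxCount_update (by rw [hxi]; omega)
    exact mul_nonpos_of_nonpos_of_nonneg (sub_nonpos.2 (by exact_mod_cast hM))
      (sub_nonneg.2 (pow_mul_pow_le_pow_mul_pow hu huv hjl))
  · have hM : maxCount (update x i b) ≤ maxCount x := by
      have hback : update (update x i b) i a = x := by
        rw [update_idem, ← hxi, update_eq_self]
      conv_rhs => rw [← hback]
      exact maxCount_le_maxCount_update (by rw [update_self]; omega)
    exact mul_nonpos_of_nonneg_of_nonpos (sub_nonneg.2 (by exact_mod_cast hM))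
      (sub_nonpos.2 (pow_mul_pow_le_pow_mul_pow hu huv hlj.le))

lemma sum_moveTerm_nonpos (hq : 0 ≤ q) (hab : a ≠ b) {u v : ℝ} (hu : 0 ≤ u)
    (huv : u ≤ v) :
    ∑ i : ι, ∑ x : ι → α with x i = a, moveTerm q a b u v i x ≤ 0 := by
  refine sum_nonpos fun i _ => sum_nonpos_of_involution
    (fun x => Equiv.swap a b ∘ update x i b) (fun x _ => by simp) (fun x hx => ?_)
    fun x hx => moveTerm_add_moveTerm_swap_nonpos hq hab hu huv (mem_filter.1 hx).2
  rw [update_swap_comp_update (mem_filter.1 hx).2]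
  funext j
  simp

lemma sum_cellCount_mul (a : α) (F : (ι → α) → ℝ) :
    ∑ x : ι → α, (cellCount x a : ℝ) * F x = ∑ i, ∑ x with x i = a, F x := by
  simp only [cellCount, card_filter, Nat.cast_sum, Nat.cast_ite, Nat.cast_one, Nat.cast_zero,
    sum_mul, ite_mul, one_mul, zero_mul]
  rw [sum_comm]
  simp only [sum_filter]

lemma sum_filter_apply_eq_update (i : ι) (a b : α) (F : (ι → α) → ℝ) :
    ∑ x with x i = b, F x = ∑ x with x i = a, F (update x i b) := by
  refine (sum_nbij' (fun x : ι → α => update x i b) (fun x : ι → α => update x i a)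
    ?_ ?_ ?_ ?_ fun _ _ => rfl).symm <;> intro x hx <;>
    simp only [mem_filter, mem_univ, true_and] at hx ⊢
  · exact update_self i b x
  · exact update_self i a x
  · rw [update_idem, ← hx, update_eq_self]
  · rw [update_idem, ← hx, update_eq_self]

lemma sum_derivative_eq_sum_moveTerm (q : α → ℝ) (hab : a ≠ b) (u v : ℝ) :
    ∑ x : ι → α, ((cellCount x a : ℝ) * u ^ (cellCount x a - 1) * v ^ cellCount x b
        - cellCount x b * u ^ cellCount x a * v ^ (cellCount x b - 1))
        * outerWeight q a b x * maxCount x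
      = ∑ i : ι, ∑ x : ι → α with x i = a, moveTerm q a b u v i x := by
  simp only [sub_mul, mul_assoc]
  rw [sum_sub_distrib, sum_cellCount_mul, sum_cellCount_mul, ← sum_sub_distrib]
  refine sum_congr rfl fun i _ => ?_
  rw [sum_filter_apply_eq_update i a b, ← sum_sub_distrib]
  refine sum_congr rfl fun x hx => ?_
  have hxi : x i = a := (mem_filter.1 hx).2
  have hya := cellCount_update_apply_add_one (hxi ▸ hab : x i ≠ b)
  rw [hxi] at hya
  rw [moveTerm, outerWeight_update hxi, cellCount_update_self (hxi ▸ hab), Nat.add_sub_cancel,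
    show cellCount (update x i b) a = cellCount x a - 1 by omega]
  ring

end TwoCells

section Transfer

variable {ι α : Type*} [Fintype ι] [DecidableEq ι] [Fintype α] [DecidableEq α]
  {q : α → ℝ} {a b : α}

lemma hasDerivAt_expectedMaxCount_update_update (q : α → ℝ) (hab : a ≠ b) (s u : ℝ) :
    HasDerivAt (fun u => expectedMaxCount ι (update (update q a u) b (s - u)))
      (∑ x : ι → α, ((cellCount x a : ℝ) * u ^ (cellCount x a - 1) * (s - u) ^ cellCount x b
        - cellCount x b * u ^ cellCount x a * (s - u) ^ (cellCount x b - 1))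
        * outerWeight q a b x * maxCount x) u := by
  simp only [expectedMaxCount, prod_update_update q hab]
  refine HasDerivAt.fun_sum fun x _ => ?_
  have hpow := hasDerivAt_pow (cellCount x a) u
  have hpow' := ((hasDerivAt_const u s).fun_sub (hasDerivAt_id' u)).fun_pow (cellCount x b)
  exact (((hpow.mul hpow').mul_const (outerWeight q a b x)).mul_const
    (maxCount x : ℝ)).congr_deriv (by ring)

theorem expectedMaxCount_le_transfer (hq : 0 ≤ q) (hab : a ≠ b) (hle : q a ≤ q b) {ε : ℝ}
    (hε : 0 ≤ ε) (hεa : ε ≤ q a) :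
    expectedMaxCount ι q
      ≤ expectedMaxCount ι (update (update q a (q a - ε)) b (q b + ε)) := by
  set s := q a + q b
  have hderiv := hasDerivAt_expectedMaxCount_update_update (ι := ι) q hab s
  have hanti : AntitoneOn (fun u => expectedMaxCount ι (update (update q a u) b (s - u)))
      (Set.Icc 0 (s / 2)) := by
    refine antitoneOn_of_deriv_nonpos (convex_Icc 0 (s / 2))
      (fun u _ => (hderiv u).continuousAt.continuousWithinAt)
      (fun u _ => (hderiv u).differentiableAt.differentiableWithinAt) fun u hu => ?_
    rw [interior_Icc] at hu
    rw [(hderiv u).deriv, sum_derivative_eq_sum_moveTerm q hab]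
    exact sum_moveTerm_nonpos hq hab hu.1.le (by linarith [hu.2])
  have hq_eq : update (update q a (q a)) b (s - q a) = q := by
    rw [show s - q a = q b by ring, update_eq_self, update_eq_self]
  have hq'_eq : s - (q a - ε) = q b + ε := by ring
  have := hanti ⟨by linarith, by linarith⟩ ⟨hq a, by linarith⟩
    (by linarith : q a - ε ≤ q a)
  simpa only [hq_eq, hq'_eq] using this

end Transfer
section Reduction

variable {ι α : Type*} [Fintype ι] [DecidableEq ι] [Fintype α]

noncomputable def interiorCells (c : ℝ) (q : α → ℝ) : Finset α := {k | 0 < q k ∧ q k < c}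

lemma eq_zero_or_eq_of_notMem_interiorCells {c : ℝ} {q : α → ℝ} (hq : 0 ≤ q)
    (hqc : ∀ k, q k ≤ c) {k : α} (hk : k ∉ interiorCells c q) : q k = 0 ∨ q k = c := by
  simp only [interiorCells, mem_filter, mem_univ, true_and, not_and_or, not_lt] at hk
  exact hk.imp (le_antisymm · (hq k)) (le_antisymm (hqc k))

variable [DecidableEq α]

lemma expectedMaxCount_comp_of_injective {β : Type*} [Fintype β] [DecidableEq β] {f : β → α}
    (hf : Injective f) {q : α → ℝ} (hq : ∀ k ∉ Set.range f, q k = 0) :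
    expectedMaxCount ι (q ∘ f) = expectedMaxCount ι q := by
  refine Fintype.sum_of_injective (fun x : ι → β => f ∘ x) hf.comp_left _ _ (fun y hy => ?_)
    fun x => by simp [maxCount_comp_of_injective hf]
  obtain ⟨i, hi⟩ : ∃ i, y i ∉ Set.range f := by
    by_contra! h
    exact hy ⟨fun i => (h i).choose, funext fun i => (h i).choose_spec⟩
  rw [prod_eq_zero (mem_univ i) (hq _ hi), zero_mul]

lemma expectedMaxCount_eq_uniform {K' : ℕ} (hK' : 0 < K') {q : α → ℝ} (hsum : ∑ k, q k = 1)
    (hq : ∀ k, q k = 0 ∨ q k = 1 / K') :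
    expectedMaxCount ι q = expectedMaxCount ι (fun _ : Fin K' => (1 / K' : ℝ)) := by
  set S : Finset α := {k | q k ≠ 0}
  have hS : ∀ k ∈ S, q k = 1 / K' := fun k hk => (hq k).resolve_left (mem_filter.1 hk).2
  have hcard : Fintype.card S = K' := by
    have h : (#S : ℝ) * (1 / K') = 1 := by
      rw [← sum_filter_ne_zero] at hsum
      rwa [sum_congr rfl hS, sum_const, nsmul_eq_mul] at hsum
    rw [mul_one_div, div_eq_one_iff_eq (by positivity)] at h
    rw [Fintype.card_coe]
    exact_mod_cast h
  have hsupp : ∀ k ∉ Set.range ((↑) : S → α), q k = 0 := fun k hk => by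
    by_contra h
    exact hk ⟨⟨k, mem_filter.2 ⟨mem_univ k, h⟩⟩, rfl⟩
  have hunif : q ∘ ((↑) : S → α) = fun _ => (1 / K' : ℝ) := funext fun k => hS k k.2
  rw [← expectedMaxCount_comp_of_injective Subtype.val_injective hsupp, hunif]
  exact (expectedMaxCount_comp_of_injective (Fintype.equivFinOfCardEq hcard).symm.injective
    (by simp)).symm

lemma sum_update_update (q : α → ℝ) {a b : α} (hab : a ≠ b) (u v : ℝ) :
    ∑ k, update (update q a u) b v k = ∑ k, q k + (u - q a) + (v - q b) := by
  have hupd : ∀ (f : α → ℝ) (i : α) (w : ℝ),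
      ∑ k, update f i w k = ∑ k, f k + (w - f i) := by
    intro f i w
    rw [sum_update_of_mem (mem_univ i), sum_eq_add_sum_sdiff_singleton_of_mem (mem_univ i) f]
    ring
  rw [hupd, hupd, update_of_ne hab.symm]

lemma exists_transfer_card_interiorCells_lt {c : ℝ} {q : α → ℝ} (hq : 0 ≤ q)
    (hqc : ∀ k, q k ≤ c) {a b : α} (ha : a ∈ interiorCells c q) (hb : b ∈ interiorCells c q)
    (hab : a ≠ b) (hle : q a ≤ q b) :
    ∃ q' : α → ℝ, 0 ≤ q' ∧ (∀ k, q' k ≤ c) ∧ ∑ k, q' k = ∑ k, q k ∧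
      expectedMaxCount ι q ≤ expectedMaxCount ι q' ∧
      #(interiorCells c q') < #(interiorCells c q) := by
  simp only [interiorCells, mem_filter, mem_univ, true_and] at ha hb
  set ε := min (q a) (c - q b)
  have hε : 0 ≤ ε := le_min (hq a) (by linarith)
  set q' := update (update q a (q a - ε)) b (q b + ε)
  have hq'a : q' a = q a - ε := by simp [q', hab]
  have hq'b : q' b = q b + ε := by simp [q']
  have hq'k : ∀ k, k ≠ a → k ≠ b → q' k = q k := fun k hka hkb => by
    simp [q', update_of_ne hka, update_of_ne hkb]
  have hbound : ∀ k, 0 ≤ q' k ∧ q' k ≤ c := fun k => by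
    by_cases hka : k = a
    · subst hka; rw [hq'a]; constructor <;> linarith [min_le_left (q k) (c - q b), hqc k]
    by_cases hkb : k = b
    · subst hkb; rw [hq'b]; constructor <;> linarith [min_le_right (q a) (c - q k), hq k]
    · rw [hq'k k hka hkb]; exact ⟨hq k, hqc k⟩
  have hsub : interiorCells c q' ⊆ interiorCells c q := fun k hk => by
    simp only [interiorCells, mem_filter, mem_univ, true_and] at hk ⊢
    by_cases hka : k = a
    · subst hka; exact ha
    by_cases hkb : k = b
    · subst hkb; exact hb
    · rwa [← hq'k k hka hkb]
  have hleaves : a ∉ interiorCells c q' ∨ b ∉ interiorCells c q' := by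
    simp only [interiorCells, mem_filter, mem_univ, true_and, hq'a, hq'b, not_and_or, not_lt]
    rcases (min_choice (q a) (c - q b) : ε = q a ∨ ε = c - q b) with h | h
    · exact Or.inl (Or.inl (by linarith))
    · exact Or.inr (Or.inr (by linarith))
  refine ⟨q', fun k => (hbound k).1, fun k => (hbound k).2, ?_,
    expectedMaxCount_le_transfer hq hab hle hε (min_le_left _ _), card_lt_card ?_⟩
  · rw [sum_update_update q hab]; ring
  · refine (ssubset_iff_of_subset hsub).2 ?_
    rcases hleaves with h | h
    exacts [⟨a, by simpa [interiorCells] using ha, h⟩,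
      ⟨b, by simpa [interiorCells] using hb, h⟩]

lemma card_interiorCells_ne_one {K' : ℕ} {q : α → ℝ} (hq : 0 ≤ q) (hqc : ∀ k, q k ≤ 1 / K')
    (hsum : ∑ k, q k = 1) : #(interiorCells (1 / K') q) ≠ 1 := by
  set c : ℝ := 1 / K'
  intro h1
  obtain ⟨a, ha⟩ := card_eq_one.1 h1
  have haI : 0 < q a ∧ q a < c := by
    have h := mem_singleton_self a
    rw [← ha] at h
    simpa only [interiorCells, mem_filter, mem_univ, true_and] using h
  have hsplit : ∀ k, q k = (if q k = c then c else 0) + (if k = a then q a else 0) := by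
    intro k
    by_cases hka : k = a
    · subst hka; simp [haI.2.ne]
    · have hk : k ∉ interiorCells c q := by rw [ha, mem_singleton]; exact hka
      rw [if_neg hka, add_zero]
      rcases eq_zero_or_eq_of_notMem_interiorCells hq hqc hk with h | h <;>
        split_ifs <;> linarith
  rw [sum_congr rfl fun k _ => hsplit k, sum_add_distrib, sum_ite_eq', if_pos (mem_univ a),
    sum_ite, sum_const_zero, add_zero, sum_const, nsmul_eq_mul] at hsum
  set n := #{k | q k = c}
  have hK' : (0 : ℝ) < K' := one_div_pos.1 (haI.1.trans haI.2)
  have hKc : (K' : ℝ) * c = 1 := mul_one_div_cancel hK'.ne'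
  have hlo : (n : ℝ) < K' := by nlinarith [mul_lt_mul_of_pos_left haI.1 hK']
  have hhi : (K' : ℝ) < n + 1 := by nlinarith [mul_lt_mul_of_pos_left haI.2 hK']
  have : n < K' := by exact_mod_cast hlo
  have : K' < n + 1 := by exact_mod_cast hhi
  omega

theorem expectedMaxCount_le_uniform {K' : ℕ} (hK' : 0 < K') {q : α → ℝ} (hq : 0 ≤ q)
    (hsum : ∑ k, q k = 1) (hqc : ∀ k, q k ≤ 1 / K') :
    expectedMaxCount ι q ≤ expectedMaxCount ι (fun _ : Fin K' => (1 / K' : ℝ)) := by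
  induction hn : #(interiorCells (1 / K') q) using Nat.strong_induction_on generalizing q with
  | _ n ih =>
  match n, hn with
  | 0, hn =>
    refine (expectedMaxCount_eq_uniform hK' hsum fun k => ?_).le
    exact eq_zero_or_eq_of_notMem_interiorCells hq hqc
      (by rw [card_eq_zero.1 hn]; exact notMem_empty k)
  | 1, hn => exact absurd hn (card_interiorCells_ne_one hq hqc hsum)
  | n + 2, hn =>
    obtain ⟨a, ha, b, hb, hab⟩ := one_lt_card.1 (by omega : 1 < #(interiorCells (1 / K') q))
    wlog hle : q a ≤ q b generalizing a b
    · exact this b hb a ha hab.symm (le_of_not_ge hle)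
    obtain ⟨q', hq', hq'c, hsum', hle', hlt⟩ :=
      exists_transfer_card_interiorCells_lt (ι := ι) hq hqc ha hb hab hle
    exact hle'.trans (ih _ (hn ▸ hlt) hq' (hsum'.trans hsum) hq'c rfl)

end Reduction

theorem integral_comp_eq_sum_prod {Ω ι α : Type*} [MeasurableSpace Ω] {μ : Measure Ω}
    [IsProbabilityMeasure μ] [Fintype ι] [DecidableEq ι] [Fintype α] [MeasurableSpace α]
    [MeasurableSingletonClass α] {X : ι → Ω → α} (hX : ∀ i, Measurable (X i))
    (hindep : iIndepFun X μ) {q : α → ℝ} (hq : 0 ≤ q)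
    (hlaw : ∀ i k, μ {ω | X i ω = k} = ENNReal.ofReal (q k)) (f : (ι → α) → ℝ) :
    ∫ ω, f (fun i => X i ω) ∂μ = ∑ x : ι → α, (∏ i, q (x i)) * f x := by
  have hY : Measurable fun ω i => X i ω := measurable_pi_lambda _ hX
  rw [← integral_map hY.aemeasurable (measurable_of_countable f).aestronglyMeasurable,
    integral_fintype .of_finite]
  refine sum_congr rfl fun x _ => ?_
  have hpre : (fun ω i => X i ω) ⁻¹' {x} = ⋂ i, X i ⁻¹' {x i} := by
    ext ω
    simp [funext_iff]
  rw [Measure.real, Measure.map_apply hY (measurableSet_singleton x), hpre,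
    hindep.meas_iInter fun i => ⟨{x i}, measurableSet_singleton _, rfl⟩, smul_eq_mul]
  simp only [Set.preimage, Set.mem_singleton_iff, hlaw, ENNReal.toReal_prod,
    ENNReal.toReal_ofReal (hq _)]

end MultinomialMax

theorem stmt5_general
    {Ω : Type*} [MeasureSpace Ω] [IsProbabilityMeasure (ℙ : Measure Ω)]
    (N K K' : ℕ) (hK' : 0 < K')
    (p : Fin K → ℝ) (hp_nonneg : ∀ k, 0 ≤ p k) (hp_sum : ∑ k, p k = 1)
    (hp_le : ∀ k, p k ≤ 1 / K')
    (ξ : Fin N → Ω → Fin K) (hξ_meas : ∀ i, Measurable (ξ i))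
    (hξ_indep : iIndepFun ξ ℙ)
    (hξ_law : ∀ i k, ℙ {ω | ξ i ω = k} = ENNReal.ofReal (p k))
    (η : Fin N → Ω → Fin K') (hη_meas : ∀ i, Measurable (η i))
    (hη_indep : iIndepFun η ℙ)
    (hη_law : ∀ i k, ℙ {ω | η i ω = k} = 1 / (K' : ℝ≥0∞)) :
    (∫ ω, ((Finset.univ.sup fun k : Fin K =>
        (Finset.filter (fun i => ξ i ω = k) Finset.univ).card : ℕ) : ℝ))
      ≤ ∫ ω, ((Finset.univ.sup fun k : Fin K' =>
        (Finset.filter (fun i => η i ω = k) Finset.univ).card : ℕ) : ℝ) := by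
  have hη_law' : ∀ i k, ℙ {ω | η i ω = k} = ENNReal.ofReal (1 / K') := fun i k => by
    rw [hη_law, ENNReal.ofReal_div_of_pos (by exact_mod_cast hK'), ENNReal.ofReal_one,
      ENNReal.ofReal_natCast]
  calc _ = MultinomialMax.expectedMaxCount (Fin N) p :=
        MultinomialMax.integral_comp_eq_sum_prod hξ_meas hξ_indep hp_nonneg hξ_law
          (fun x => (MultinomialMax.maxCount x : ℝ))
    _ ≤ MultinomialMax.expectedMaxCount (Fin N) (fun _ : Fin K' => (1 / K' : ℝ)) :=
        MultinomialMax.expectedMaxCount_le_uniform hK' hp_nonneg hp_sum hp_le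
    _ = _ := (MultinomialMax.integral_comp_eq_sum_prod hη_meas hη_indep
        (fun _ => by positivity) hη_law' (fun x => (MultinomialMax.maxCount x : ℝ))).symm

/-- Domination of expected maxima of multinomial cell counts: if `(N_1, …, N_K)` is
multinomial with parameters `N` and `(p_1, …, p_K)` with `p_k ≤ 1/K'` for all `k`
(`K' ≤ K`), and `(M_1, …, M_{K'})` is multinomial with parameters `N`, `K'` and uniform
probabilities, then `E[max_k N_k] ≤ E[max_k M_k]`. The multinomial vectors are realized
as cell counts of i.i.d. categorical variables `ξ` resp. `η`. -/
theorem stmt5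
    {Ω : Type*} [MeasureSpace Ω] [IsProbabilityMeasure (ℙ : Measure Ω)]
    (N K K' : ℕ) (hK' : 0 < K') (hKK' : K' ≤ K)
    (p : Fin K → ℝ) (hp_nonneg : ∀ k, 0 ≤ p k) (hp_sum : ∑ k, p k = 1)
    (hp_le : ∀ k, p k ≤ 1 / K')
    (ξ : Fin N → Ω → Fin K) (hξ_meas : ∀ i, Measurable (ξ i))
    (hξ_indep : iIndepFun ξ ℙ)
    (hξ_law : ∀ i k, ℙ {ω | ξ i ω = k} = ENNReal.ofReal (p k))
    (η : Fin N → Ω → Fin K') (hη_meas : ∀ i, Measurable (η i))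
    (hη_indep : iIndepFun η ℙ)
    (hη_law : ∀ i k, ℙ {ω | η i ω = k} = 1 / (K' : ℝ≥0∞)) :
    (∫ ω, ((Finset.univ.sup fun k : Fin K =>
        (Finset.filter (fun i => ξ i ω = k) Finset.univ).card : ℕ) : ℝ))
      ≤ ∫ ω, ((Finset.univ.sup fun k : Fin K' =>
        (Finset.filter (fun i => η i ω = k) Finset.univ).card : ℕ) : ℝ) :=
  stmt5_general N K K' hK' p hp_nonneg hp_sum hp_le ξ hξ_meas hξ_indep hξ_law η hη_meas hη_indep
    hη_law
end
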